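/- The coboundary operator associated to the triple (ρ,θ,Φ) squares to zero: for every p and every ψ ∈ ∧^p(U,V), δ^{p+1}(δ^p ψ) = 0. -/

import Mathlib

open scoped BigOperators

/-- The raw coboundary formula of Hochschild–Serre/Chevalley–Eilenberg type associated to a
triple `(r, t, f)` consisting of (the underlying functions of) a bracket `r` on `U`, a bracket
`t` on `V` and a map `f : U → V`.  It sends a raw `p`-cochain `ψ : (Fin p → U) → V` to the raw
`(p+1)`-cochain
`δψ(x₀,…,x_p) = ∑ₛ (-1)^(s+1) t(f(xₛ), ψ(x₀,…,x̂ₛ,…,x_p))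
              + ∑_{s<u} (-1)^(s+u+1) ψ(r(xₛ,x_u), x₀,…,x̂ₛ,…,x̂_u,…,x_p)`
(indices starting at `0`, so the signs match the formula of the paper where indices start
at `1`). -/
noncomputable def cobound {U V : Type*} [AddCommGroup V]
    (r : U → U → U) (t : V → V → V) (f : U → V) :
    ∀ p : ℕ, ((Fin p → U) → V) → (Fin (p + 1) → U) → V
  | 0, ψ => fun x => ∑ s : Fin 1, ((-1 : ℤ) ^ ((s : ℕ) + 1)) • t (f (x s)) (ψ Fin.elim0)
  | (p + 1), ψ => fun x =>
      (∑ s : Fin (p + 2),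
        ((-1 : ℤ) ^ ((s : ℕ) + 1)) • t (f (x s)) (ψ fun i => x (s.succAbove i)))
      + ∑ s : Fin (p + 2), ∑ u : Fin (p + 2),
          if h : (s : ℕ) < (u : ℕ) then
            ((-1 : ℤ) ^ ((s : ℕ) + (u : ℕ) + 1)) •
              ψ (Fin.cons (r (x s) (x u)) fun m : Fin p =>
                  x (u.succAbove ((Fin.castLT s
                    (lt_of_lt_of_le h (Nat.lt_succ_iff.mp u.isLt))).succAbove m)))
          else 0

/-!
With `ι_a = contract a` and `L_a = lieDeriv ρ θ Φ a`, Cartan's formula reads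
`ι_a ∘ δ = -L_a - δ ∘ ι_a` on alternating cochains (with the sign conventions of `cobound`).
By induction on the degree it shows that `δψ` is alternating and that `L_a ∘ δ = δ ∘ L_a`; the
latter reduces to `[L_a, L_b] = L_{[a,b]}`, which is where the Jacobi identities and the morphism
property of `Φ` enter. Then `ι_a δδψ = -L_a δψ + δ L_a ψ + δδ ι_a ψ` vanishes by induction.
-/

open Function

theorem Fin.removeNth_succ_cons {n : ℕ} {α : Type*} (a : α) (x : Fin (n + 1) → α)
    (i : Fin (n + 1)) :
    i.succ.removeNth (Fin.cons a x : Fin (n + 2) → α) = Fin.cons a (i.removeNth x) :=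
  Fin.cons_comp_succ_succAbove a x i

theorem AddMonoidHom.leibniz_of_jacobi {M : Type*} [AddCommGroup M] (B : M →+ M →+ M)
    (halt : ∀ x, B x x = 0) (hjac : ∀ x y z, B (B x y) z + B (B y z) x + B (B z x) y = 0)
    (x y z : M) : B (B x y) z = B x (B y z) - B y (B x z) := by
  have skew (u v : M) : B u v = -B v u :=
    eq_neg_of_add_eq_zero_left (by simpa [halt] using halt (u + v))
  rw [← sub_eq_zero, ← hjac x y z, skew (B y z), skew (B z x), skew z x, map_neg]
  abel

namespace Cobound

variable {U V : Type*} [AddCommGroup V]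

def contract (a : U) {p : ℕ} : ((Fin (p + 1) → U) → V) →+ ((Fin p → U) → V) where
  toFun ψ x := ψ (Fin.cons a x)
  map_zero' := rfl
  map_add' _ _ := rfl

@[simp]
theorem contract_apply (a : U) {p : ℕ} (ψ : (Fin (p + 1) → U) → V) (x : Fin p → U) :
    contract a ψ x = ψ (Fin.cons a x) :=
  rfl

theorem ext_contract {p : ℕ} {F G : (Fin (p + 1) → U) → V}
    (h : ∀ a, contract a F = contract a G) : F = G := by
  funext x
  rw [← Fin.cons_self_tail x]
  exact congrFun (h (x 0)) (Fin.tail x)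

variable [AddCommGroup U]

/-- Alternation is asked over `ℤ` only: the operators below are merely additive. -/
def IsAlternating {p : ℕ} (ψ : (Fin p → U) → V) : Prop :=
  ∃ f : U [⋀^Fin p]→ₗ[ℤ] V, ⇑f = ψ

namespace IsAlternating

theorem of_update_add {p : ℕ} {ψ : (Fin p → U) → V}
    (hadd : ∀ x i a b, ψ (update x i (a + b)) = ψ (update x i a) + ψ (update x i b))
    (heq : ∀ x i j, i ≠ j → x i = x j → ψ x = 0) : IsAlternating ψ :=
  ⟨{ toFun := ψ
     map_update_add' := fun {_} x i a b => by convert hadd x i a b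
     map_update_smul' := fun {inst} x i c a => by
       obtain rfl := Subsingleton.elim inst (instDecidableEqFin p)
       exact (AddMonoidHom.mk' (fun a => ψ (update x i a)) (hadd x i)).map_zsmul c a
     map_eq_zero_of_eq' := fun x i j hx hij => heq x i j hij hx }, rfl⟩

variable {p n : ℕ} {ψ φ : (Fin p → U) → V}

theorem neg (hψ : IsAlternating ψ) : IsAlternating (-ψ) := by
  obtain ⟨f, rfl⟩ := hψ
  exact ⟨-f, rfl⟩

theorem sub (hψ : IsAlternating ψ) (hφ : IsAlternating φ) : IsAlternating (ψ - φ) := by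
  obtain ⟨f, rfl⟩ := hψ
  obtain ⟨g, rfl⟩ := hφ
  exact ⟨f - g, rfl⟩

theorem update_add (hψ : IsAlternating ψ) (x : Fin p → U) (i : Fin p) (a b : U) :
    ψ (update x i (a + b)) = ψ (update x i a) + ψ (update x i b) := by
  obtain ⟨f, rfl⟩ := hψ
  exact f.map_update_add x i a b

theorem update_sub (hψ : IsAlternating ψ) (x : Fin p → U) (i : Fin p) (a b : U) :
    ψ (update x i (a - b)) = ψ (update x i a) - ψ (update x i b) := by
  obtain ⟨f, rfl⟩ := hψ
  exact f.map_update_sub x i a b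

theorem eq_zero_of_eq (hψ : IsAlternating ψ) (x : Fin p → U) {i j : Fin p} (hij : i ≠ j)
    (hx : x i = x j) : ψ x = 0 := by
  obtain ⟨f, rfl⟩ := hψ
  exact f.map_eq_zero_of_eq x hx hij

theorem comp_swap (hψ : IsAlternating ψ) (x : Fin p → U) {i j : Fin p} (hij : i ≠ j) :
    ψ (x ∘ Equiv.swap i j) = -ψ x := by
  obtain ⟨f, rfl⟩ := hψ
  exact f.map_swap x hij

theorem cons_removeNth {ψ : (Fin (n + 1) → U) → V} (hψ : IsAlternating ψ)
    (j : Fin (n + 1)) (b : U) (x : Fin (n + 1) → U) :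
    ψ (Fin.cons b (j.removeNth x)) = (-1) ^ (j : ℕ) • ψ (update x j b) := by
  obtain ⟨f, rfl⟩ := hψ
  rw [← Fin.insertNth_removeNth, f.map_insertNth, smul_smul, ← pow_add,
    Even.neg_one_pow ⟨_, rfl⟩, one_smul]
  rfl

theorem cons_cons {ψ : (Fin (n + 2) → U) → V} (hψ : IsAlternating ψ) (a b : U)
    (y : Fin n → U) : ψ (Fin.cons a (Fin.cons b y)) = -ψ (Fin.cons b (Fin.cons a y)) := by
  obtain ⟨f, rfl⟩ := hψ
  have := f.map_insertNth 1 b (Fin.cons a y)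
  rw [show (1 : Fin (n + 2)) = (0 : Fin (n + 1)).succ from rfl, Fin.insertNth_succ_cons,
    Fin.insertNth_zero'] at this
  rw [this]
  simp [Matrix.vecCons]

theorem contract {ψ : (Fin (n + 1) → U) → V} (hψ : IsAlternating ψ) (a : U) :
    IsAlternating (contract a ψ) := by
  obtain ⟨f, rfl⟩ := hψ
  exact ⟨f.curryLeft a, rfl⟩

theorem contract_contract_self {ψ : (Fin (n + 2) → U) → V} (hψ : IsAlternating ψ) (a : U) :
    Cobound.contract a (Cobound.contract a ψ) = 0 := by
  obtain ⟨f, rfl⟩ := hψ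
  exact congrArg DFunLike.coe (f.curryLeft_same a)

theorem contract_add {ψ : (Fin (n + 1) → U) → V} (hψ : IsAlternating ψ) (a b : U) :
    Cobound.contract (a + b) ψ = Cobound.contract a ψ + Cobound.contract b ψ := by
  obtain ⟨f, rfl⟩ := hψ
  exact congrArg DFunLike.coe (map_add f.curryLeft a b)

theorem eq_zero_of_contract_eq_zero {ψ : (Fin (n + 1) → U) → V} (hψ : IsAlternating ψ) {a : U}
    (h : Cobound.contract a ψ = 0) {x : Fin (n + 1) → U} {j : Fin (n + 1)} (hx : x j = a) :
    ψ x = 0 := by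
  rcases eq_or_ne j 0 with rfl | hj
  · rw [← Fin.cons_self_tail x, hx]
    exact congrFun h _
  · have h0 : (x ∘ Equiv.swap 0 j) 0 = a := by simp [hx]
    rw [← neg_eq_zero, ← hψ.comp_swap x hj.symm, ← Fin.cons_self_tail (x ∘ Equiv.swap 0 j), h0]
    exact congrFun h _

theorem of_contract {ψ : (Fin (n + 1) → U) → V}
    (hcontract : ∀ a, IsAlternating (Cobound.contract a ψ))
    (hadd : ∀ a b, Cobound.contract (a + b) ψ = Cobound.contract a ψ + Cobound.contract b ψ)
    (hzero : ∀ a x j, x j = a → Cobound.contract a ψ x = 0) : IsAlternating ψ := by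
  refine of_update_add (fun x i b c => ?_) (fun x i j hij hx => ?_) <;>
    obtain ⟨a, t, rfl⟩ : ∃ a t, x = Fin.cons a t := ⟨x 0, Fin.tail x, (Fin.cons_self_tail x).symm⟩
  · cases i using Fin.cases with
    | zero => simpa using congrFun (hadd b c) t
    | succ i => simpa [← Fin.cons_update] using (hcontract a).update_add t i b c
  · cases i using Fin.cases <;> cases j using Fin.cases
    · exact absurd rfl hij
    · exact hzero _ _ _ (by simpa using hx.symm)
    · exact hzero _ _ _ (by simpa using hx)
    · exact (hcontract a).eq_zero_of_eq t (fun h => hij (congrArg _ h)) (by simpa using hx)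

end IsAlternating

section Coboundary

variable (ρ : U →+ U →+ U) (θ : V →+ V →+ V) (Φ : U →+ V)

local notation "δ" => cobound (fun a b => ρ a b) (fun x y => θ x y) (fun a => Φ a)

def lieDeriv (a : U) {p : ℕ} : ((Fin p → U) → V) →+ ((Fin p → U) → V) where
  toFun ψ x := θ (Φ a) (ψ x) - ∑ i, ψ (update x i (ρ a (x i)))
  map_zero' := by ext; simp
  map_add' F G := by
    ext
    simp only [Pi.add_apply, map_add, Finset.sum_add_distrib]
    abel

def actionSum {p : ℕ} (ψ : (Fin p → U) → V) (x : Fin (p + 1) → U) : V :=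
  ∑ s : Fin (p + 1), (-1 : ℤ) ^ ((s : ℕ) + 1) • θ (Φ (x s)) (ψ (s.removeNth x))

def bracketTerm {q : ℕ} (ψ : (Fin (q + 1) → U) → V) (x : Fin (q + 2) → U) (s u : Fin (q + 2)) :
    V :=
  if h : (s : ℕ) < u then
    (-1 : ℤ) ^ ((s : ℕ) + u + 1) •
      ψ (Fin.cons (ρ (x s) (x u))
        ((s.castLT (h.trans_le (Nat.lt_succ_iff.mp u.isLt))).removeNth (u.removeNth x)))
  else 0

variable {ρ θ Φ}

theorem lieDeriv_apply (a : U) {p : ℕ} (ψ : (Fin p → U) → V) (x : Fin p → U) :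
    lieDeriv ρ θ Φ a ψ x = θ (Φ a) (ψ x) - ∑ i, ψ (update x i (ρ a (x i))) :=
  rfl

theorem cobound_succ_apply {q : ℕ} (ψ : (Fin (q + 1) → U) → V) (x : Fin (q + 2) → U) :
    δ (q + 1) ψ x = actionSum θ Φ ψ x + ∑ s, ∑ u, bracketTerm ρ ψ x s u :=
  rfl

theorem cobound_add (p : ℕ) (F G : (Fin p → U) → V) : δ p (F + G) = δ p F + δ p G := by
  have dite_add (P : Prop) [Decidable P] (f g : P → V) :
      (if h : P then f h + g h else 0) = (if h : P then f h else 0) + if h : P then g h else 0 := by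
    split_ifs <;> simp
  funext x
  cases p
  · simp [cobound, Finset.sum_add_distrib, smul_add]
  · simp only [cobound, Pi.add_apply, map_add, smul_add, dite_add, Finset.sum_add_distrib]
    abel

theorem cobound_zero (p : ℕ) : δ p (0 : (Fin p → U) → V) = 0 :=
  map_zero (AddMonoidHom.mk' (δ p) (cobound_add p))

theorem cobound_neg (p : ℕ) (F : (Fin p → U) → V) : δ p (-F) = -δ p F :=
  map_neg (AddMonoidHom.mk' (δ p) (cobound_add p)) F

theorem cobound_sub (p : ℕ) (F G : (Fin p → U) → V) : δ p (F - G) = δ p F - δ p G :=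
  map_sub (AddMonoidHom.mk' (δ p) (cobound_add p)) F G

theorem actionSum_cons {p : ℕ} (ψ : (Fin (p + 1) → U) → V) (a : U) (x : Fin (p + 1) → U) :
    actionSum θ Φ ψ (Fin.cons a x) = -θ (Φ a) (ψ x) - actionSum θ Φ (contract a ψ) x := by
  rw [actionSum, actionSum, Fin.sum_univ_succ]
  simp only [Fin.cons_zero, Fin.cons_succ, Fin.removeNth_zero, Fin.tail_cons, contract_apply,
    Fin.removeNth_succ_cons]
  simp [Fin.val_succ, pow_succ, Finset.sum_neg_distrib, sub_eq_add_neg]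

theorem bracketTerm_of_le {q : ℕ} (ψ : (Fin (q + 1) → U) → V) (x : Fin (q + 2) → U)
    {s u : Fin (q + 2)} (h : u ≤ s) : bracketTerm ρ ψ x s u = 0 :=
  dif_neg (not_lt.mpr h)

theorem bracketTerm_cons_zero_succ {n : ℕ} {ψ : (Fin (n + 2) → U) → V} (hψ : IsAlternating ψ)
    (a : U) (x : Fin (n + 2) → U) (j : Fin (n + 2)) :
    bracketTerm ρ ψ (Fin.cons a x) 0 j.succ = ψ (update x j (ρ a (x j))) := by
  rw [bracketTerm, dif_pos (show ((0 : Fin (n + 1 + 2)) : ℕ) < j.succ from j.succ_pos)]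
  have hcast : ∀ h, (Fin.castLT (0 : Fin (n + 1 + 2)) h : Fin (n + 1 + 1)) = 0 := fun _ => rfl
  simp only [Fin.cons_zero, Fin.cons_succ, Fin.removeNth_succ_cons]
  rw [hcast, Fin.removeNth_zero, Fin.tail_cons, hψ.cons_removeNth, smul_smul, ← pow_add]
  rw [Even.neg_one_pow ⟨j + 1, by rw [Fin.val_zero, Fin.val_succ]; ring⟩, one_smul]

theorem bracketTerm_cons_succ_succ {n : ℕ} {ψ : (Fin (n + 2) → U) → V} (hψ : IsAlternating ψ)
    (a : U) (x : Fin (n + 2) → U) (i j : Fin (n + 2)) :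
    bracketTerm ρ ψ (Fin.cons a x) i.succ j.succ = -bracketTerm ρ (contract a ψ) x i j := by
  by_cases h : (i : ℕ) < j
  · rw [bracketTerm, bracketTerm, dif_pos (by simpa using h), dif_pos h]
    have hcast :
        ∀ h', i.succ.castLT h' = (i.castLT (h.trans_le (Nat.lt_succ_iff.mp j.isLt))).succ :=
      fun _ => rfl
    simp only [Fin.cons_succ, Fin.removeNth_succ_cons, hcast, contract_apply]
    rw [hψ.cons_cons, smul_neg, Fin.val_succ, Fin.val_succ]
    rw [show (-1 : ℤ) ^ ((i : ℕ) + 1 + (j + 1) + 1) = (-1) ^ ((i : ℕ) + j + 1) by ring]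
  · rw [bracketTerm, bracketTerm, dif_neg (by simpa using h), dif_neg h, neg_zero]

theorem bracketSum_cons {n : ℕ} {ψ : (Fin (n + 2) → U) → V} (hψ : IsAlternating ψ) (a : U)
    (x : Fin (n + 2) → U) :
    ∑ s, ∑ u, bracketTerm ρ ψ (Fin.cons a x) s u
      = ∑ j, ψ (update x j (ρ a (x j))) - ∑ s, ∑ u, bracketTerm ρ (contract a ψ) x s u := by
  simp only [Fin.sum_univ_succ (n := n + 2), bracketTerm_of_le _ _ (Fin.zero_le _),
    bracketTerm_cons_zero_succ hψ, bracketTerm_cons_succ_succ hψ, Finset.sum_neg_distrib, zero_add]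
  abel

theorem cobound_one_cons (ψ : (Fin 1 → U) → V) (a : U) (x : Fin 1 → U) :
    δ 1 ψ (Fin.cons a x) = -lieDeriv ρ θ Φ a ψ x - δ 0 (contract a ψ) x := by
  obtain ⟨b, rfl⟩ : ∃ b, x = Fin.cons b Fin.elim0 := ⟨x 0, funext fun i => by fin_cases i; rfl⟩
  have hremove : (fun i => (Fin.cons a (Fin.cons b Fin.elim0) : Fin 2 → U) (Fin.succAbove 1 i))
      = Fin.cons a Fin.elim0 := funext fun i => by fin_cases i; rfl
  simp [cobound, lieDeriv_apply, Fin.sum_univ_two, Fin.update_cons_zero, hremove, sub_eq_add_neg,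
    add_comm, add_left_comm]

theorem contract_cobound {q : ℕ} {ψ : (Fin (q + 1) → U) → V} (hψ : IsAlternating ψ) (a : U) :
    contract a (δ (q + 1) ψ) = -lieDeriv ρ θ Φ a ψ - δ q (contract a ψ) := by
  funext x
  cases q with
  | zero => exact cobound_one_cons ψ a x
  | succ n =>
    simp only [contract_apply, cobound_succ_apply, actionSum_cons, bracketSum_cons hψ,
      Pi.sub_apply, Pi.neg_apply, lieDeriv_apply]
    abel

theorem contract_cobound_zero (ψ : (Fin 0 → U) → V) (a : U) :
    contract a (δ 0 ψ) = -lieDeriv ρ θ Φ a ψ := by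
  funext x
  simp [cobound, lieDeriv_apply, Subsingleton.elim x Fin.elim0]

theorem contract_lieDeriv (a b : U) {p : ℕ} (ψ : (Fin (p + 1) → U) → V) :
    contract b (lieDeriv ρ θ Φ a ψ) = lieDeriv ρ θ Φ a (contract b ψ) - contract (ρ a b) ψ := by
  funext x
  simp only [contract_apply, lieDeriv_apply, Fin.sum_univ_succ, Fin.cons_zero, Fin.update_cons_zero,
    Fin.cons_succ, ← Fin.cons_update, Pi.sub_apply]
  abel

theorem lieDeriv_add_left {p : ℕ} {ψ : (Fin p → U) → V} (hψ : IsAlternating ψ) (a b : U) :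
    lieDeriv ρ θ Φ (a + b) ψ = lieDeriv ρ θ Φ a ψ + lieDeriv ρ θ Φ b ψ := by
  funext x
  simp only [lieDeriv_apply, map_add, AddMonoidHom.add_apply, hψ.update_add,
    Finset.sum_add_distrib, Pi.add_apply]
  abel

theorem IsAlternating.lieDeriv {p : ℕ} {ψ : (Fin p → U) → V} (hψ : IsAlternating ψ) (a : U) :
    IsAlternating (lieDeriv ρ θ Φ a ψ) := by
  refine .of_update_add (fun x i b c => ?_) (fun x i j hij hx => ?_)
  · have hterm (l : Fin p) : ψ (update (update x i (b + c)) l (ρ a (update x i (b + c) l)))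
        = ψ (update (update x i b) l (ρ a (update x i b l)))
          + ψ (update (update x i c) l (ρ a (update x i c l))) := by
      rcases eq_or_ne l i with rfl | hl
      · simp only [update_self, update_idem, map_add, hψ.update_add]
      · simp only [update_of_ne hl]
        rw [update_comm hl.symm, update_comm hl.symm, update_comm hl.symm]
        exact hψ.update_add _ i b c
    simp only [lieDeriv_apply, hψ.update_add, map_add, hterm, Finset.sum_add_distrib]
    abel
  · have hswap : update x i (ρ a (x i)) ∘ Equiv.swap i j = update x j (ρ a (x j)) := by
      rw [update_comp_equiv, Equiv.symm_swap, Equiv.swap_apply_left, hx]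
      congr 1
      exact funext (Equiv.apply_swap_eq_self hx)
    rw [lieDeriv_apply, hψ.eq_zero_of_eq x hij hx, map_zero, zero_sub, neg_eq_zero,
      Fintype.sum_eq_add i j hij fun l hl => hψ.eq_zero_of_eq _ hij (by
        simp [update_of_ne hl.1.symm, update_of_ne hl.2.symm, hx]),
      ← hswap, hψ.comp_swap _ hij, add_neg_cancel]

theorem lieDeriv_lieDeriv_sub (hρ : ∀ a b c, ρ (ρ a b) c = ρ a (ρ b c) - ρ b (ρ a c))
    (hact : ∀ a b v, θ (Φ (ρ a b)) v = θ (Φ a) (θ (Φ b) v) - θ (Φ b) (θ (Φ a) v))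
    {p : ℕ} {ψ : (Fin p → U) → V} (hψ : IsAlternating ψ) (a b : U) :
    lieDeriv ρ θ Φ a (lieDeriv ρ θ Φ b ψ) - lieDeriv ρ θ Φ b (lieDeriv ρ θ Φ a ψ)
      = lieDeriv ρ θ Φ (ρ a b) ψ := by
  funext x
  let G (a b : U) (i l : Fin p) : V :=
    ψ (update (update x i (ρ a (x i))) l (ρ b (update x i (ρ a (x i)) l)))
  have expand (a b : U) : lieDeriv ρ θ Φ a (lieDeriv ρ θ Φ b ψ) x
      = θ (Φ a) (θ (Φ b) (ψ x)) - ∑ l, θ (Φ a) (ψ (update x l (ρ b (x l))))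
        - ∑ i, θ (Φ b) (ψ (update x i (ρ a (x i)))) + ∑ i, ∑ l, G a b i l := by
    simp only [lieDeriv_apply, map_sub, map_sum, Finset.sum_sub_distrib, G]
    abel
  have hsymm (i l : Fin p) (h : i ≠ l) : G a b i l = G b a l i := by
    simp only [G, update_of_ne h, update_of_ne h.symm, update_comm h]
  have hdiag (i : Fin p) : G a b i i = G b a i i - ψ (update x i (ρ (ρ a b) (x i))) := by
    simp only [G, update_self, update_idem, hρ, hψ.update_sub, sub_sub_cancel]
  have hdouble : ∑ i, ∑ l, G a b i l
      = ∑ i, ∑ l, G b a i l - ∑ i, ψ (update x i (ρ (ρ a b) (x i))) := by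
    rw [Finset.sum_comm (f := G b a), ← Finset.sum_sub_distrib]
    refine Finset.sum_congr rfl fun i _ => ?_
    rw [← Finset.sum_erase_add _ _ (Finset.mem_univ i),
      ← Finset.sum_erase_add _ _ (Finset.mem_univ i), hdiag, Finset.sum_congr rfl fun l hl => hsymm i l (Finset.ne_of_mem_erase hl).symm]
    abel
  rw [Pi.sub_apply, expand, expand, hdouble, lieDeriv_apply, hact]
  abel

theorem contract_contract_cobound_self (hρ : ∀ a, ρ a a = 0) {q : ℕ} {ψ : (Fin (q + 1) → U) → V}
    (hψ : IsAlternating ψ) (a : U) : contract a (contract a (δ (q + 1) ψ)) = 0 := by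
  have hzero : contract 0 ψ = 0 := by simpa using hψ.contract_add 0 0
  rw [contract_cobound hψ, map_sub, map_neg, contract_lieDeriv, hρ, hzero, sub_zero]
  cases q with
  | zero => rw [contract_cobound_zero, sub_self]
  | succ n =>
    rw [contract_cobound (hψ.contract a), hψ.contract_contract_self, cobound_zero, sub_zero,
      sub_self]

theorem isAlternating_cobound (hρ : ∀ a, ρ a a = 0) {q : ℕ} {ψ : (Fin q → U) → V}
    (hψ : IsAlternating ψ) : IsAlternating (δ q ψ) := by
  induction q with
  | zero =>
    refine .of_update_add (fun x i a b => ?_)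
      (fun x i j hij _ => absurd ((Fin.eq_zero i).trans (Fin.eq_zero j).symm) hij)
    obtain rfl := Fin.eq_zero i
    simp [cobound, add_comm]
  | succ q ih =>
    have hcontract (a : U) : IsAlternating (contract a (δ (q + 1) ψ)) := by
      rw [contract_cobound hψ]
      exact (hψ.lieDeriv a).neg.sub (ih (hψ.contract a))
    refine .of_contract hcontract (fun a b => ?_) (fun a x j hx => ?_)
    · simp only [contract_cobound hψ, lieDeriv_add_left hψ, hψ.contract_add, cobound_add]
      abel
    · exact (hcontract a).eq_zero_of_contract_eq_zero (contract_contract_cobound_self hρ hψ a) hx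

theorem lieDeriv_cobound (hρ : ∀ a b c, ρ (ρ a b) c = ρ a (ρ b c) - ρ b (ρ a c))
    (hact : ∀ a b v, θ (Φ (ρ a b)) v = θ (Φ a) (θ (Φ b) v) - θ (Φ b) (θ (Φ a) v))
    {p : ℕ} {ψ : (Fin p → U) → V} (hψ : IsAlternating ψ) (a : U) :
    lieDeriv ρ θ Φ a (δ p ψ) = δ p (lieDeriv ρ θ Φ a ψ) := by
  induction p generalizing a with
  | zero =>
    refine ext_contract fun b => ?_
    rw [contract_lieDeriv, contract_cobound_zero, contract_cobound_zero, contract_cobound_zero,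
      map_neg, ← lieDeriv_lieDeriv_sub hρ hact hψ]
    abel
  | succ m ih =>
    refine ext_contract fun b => ?_
    rw [contract_lieDeriv, contract_cobound hψ, contract_cobound hψ,
      contract_cobound (hψ.lieDeriv a), contract_lieDeriv, map_sub, map_neg,
      ih (hψ.contract b), cobound_sub, ← lieDeriv_lieDeriv_sub hρ hact hψ]
    abel

theorem cobound_cobound (hρ₀ : ∀ a, ρ a a = 0)
    (hρ : ∀ a b c, ρ (ρ a b) c = ρ a (ρ b c) - ρ b (ρ a c))
    (hact : ∀ a b v, θ (Φ (ρ a b)) v = θ (Φ a) (θ (Φ b) v) - θ (Φ b) (θ (Φ a) v))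
    {p : ℕ} {ψ : (Fin p → U) → V} (hψ : IsAlternating ψ) : δ (p + 1) (δ p ψ) = 0 := by
  induction p with
  | zero =>
    refine ext_contract fun b => ?_
    rw [contract_cobound (isAlternating_cobound hρ₀ hψ), lieDeriv_cobound hρ hact hψ,
      contract_cobound_zero, cobound_neg, map_zero]
    abel
  | succ m ih =>
    refine ext_contract fun b => ?_
    rw [contract_cobound (isAlternating_cobound hρ₀ hψ), lieDeriv_cobound hρ hact hψ,
      contract_cobound hψ, cobound_sub, cobound_neg, ih (hψ.contract b), map_zero]
    abel

end Coboundary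

end Cobound

/-- The coboundary operator associated to the triple `(ρ, θ, Φ)` squares to
zero: for every `p` and every alternating `p`-linear map `ψ ∈ ⋀^p(U,V)`,
`δ^(p+1)(δ^p ψ) = 0`. -/
theorem coboundary_squares_to_zero {k U V : Type*} [Field k]
    [AddCommGroup U] [Module k U] [AddCommGroup V] [Module k V]
    (ρ : U →ₗ[k] U →ₗ[k] U) (hρalt : ∀ a : U, ρ a a = 0)
    (hρjac : ∀ a b c : U, ρ (ρ a b) c + ρ (ρ b c) a + ρ (ρ c a) b = 0)
    (θ : V →ₗ[k] V →ₗ[k] V) (hθalt : ∀ x : V, θ x x = 0)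
    (hθjac : ∀ x y z : V, θ (θ x y) z + θ (θ y z) x + θ (θ z x) y = 0)
    (Φ : U →ₗ[k] V) (hΦ : ∀ a b : U, Φ (ρ a b) = θ (Φ a) (Φ b))
    (p : ℕ) (ψ : U [⋀^Fin p]→ₗ[k] V) :
    cobound (fun a b => ρ a b) (fun x y => θ x y) (fun a => Φ a) (p + 1)
      (cobound (fun a b => ρ a b) (fun x y => θ x y) (fun a => Φ a) p ⇑ψ) = 0 := by
  let ρ' : U →+ U →+ U := LinearMap.toAddMonoidHom'.comp ρ.toAddMonoidHom
  let θ' : V →+ V →+ V := LinearMap.toAddMonoidHom'.comp θ.toAddMonoidHom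
  have hψ : Cobound.IsAlternating ⇑ψ :=
    .of_update_add (fun x => ψ.map_update_add x) fun x _ _ hij hx => ψ.map_eq_zero_of_eq x hx hij
  have hact (a b : U) (v : V) : θ (Φ (ρ a b)) v = θ (Φ a) (θ (Φ b) v) - θ (Φ b) (θ (Φ a) v) := by
    rw [hΦ]
    exact θ'.leibniz_of_jacobi hθalt hθjac _ _ _
  exact Cobound.cobound_cobound (θ := θ') (Φ := Φ.toAddMonoidHom) hρalt
    (ρ'.leibniz_of_jacobi hρalt hρjac) hact hψ
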